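/- arXiv:1412.8721 — 2 statements merged into one kernel-verified Lean document; each statement's English description precedes it below -/
import Mathlib

section
/- For 0 ≤ k ≤ n and r ≥ s ≥ 0, C(n,k) · ∏_{i=0}^{n−k−1}(2r − 2s + i) = Σ_{j=k}^{n} (−1)^{j−k} · L_r(n,j) · L_s(j,k), where L_r denotes the r-Lah numbers (as integers). -/
open Finset

/-- The r-Lah numbers `L_r(n,k)` as integers. -/
def rLah (r : ℕ) : ℕ → ℕ → ℤ
  | 0, 0 => 1
  | 0, _ + 1 => 0
  | n + 1, 0 => ((n : ℤ) + 2 * r) * rLah r n 0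
  | n + 1, k + 1 => rLah r n k + ((n : ℤ) + (k + 1) + 2 * r) * rLah r n (k + 1)

/-- The unsigned r-Stirling numbers of the first kind `c_r(n,k)` as integers. -/
def rStirling1 (r : ℕ) : ℕ → ℕ → ℤ
  | 0, 0 => 1
  | 0, _ + 1 => 0
  | n + 1, 0 => ((n : ℤ) + r) * rStirling1 r n 0
  | n + 1, k + 1 => rStirling1 r n k + ((n : ℤ) + r) * rStirling1 r n (k + 1)

/-- The r-Stirling numbers of the second kind `S_r(n,k)` as integers. -/
def rStirling2 (r : ℕ) : ℕ → ℕ → ℤ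
  | 0, 0 => 1
  | 0, _ + 1 => 0
  | n + 1, 0 => (r : ℤ) * rStirling2 r n 0
  | n + 1, k + 1 => rStirling2 r n k + ((k : ℤ) + 1 + r) * rStirling2 r n (k + 1)

/-!
Write `T(n,k) = ∑ⱼ (-1)^(j+k) L_r(n,j) L_s(j,k)`. Expanding `L_r(n+1,j)` by its recurrence and
moving the index shift onto the second factor gives, after using the recurrence of `L_s`,
`T(n+1,k+1) = T(n,k) + (n-k-1+2r-2s) T(n,k+1)` and `T(n+1,0) = (n+2r-2s) T(n,0)`.
By Pascal's rule, `C(n,k) (2r-2s)^(n-k)` (rising factorial) satisfies the same recurrence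
and the same initial values.
-/

theorem rLah_eq_zero_of_lt {r n k : ℕ} (h : n < k) : rLah r n k = 0 := by
  induction n generalizing k with
  | zero => obtain ⟨k, rfl⟩ := Nat.exists_eq_add_one_of_ne_zero (by omega : k ≠ 0); rfl
  | succ n ih =>
    obtain ⟨k, rfl⟩ := Nat.exists_eq_add_one_of_ne_zero (by omega : k ≠ 0)
    rw [rLah, ih (by omega), ih (by omega)]
    ring

/-- The recurrence of `L_r`, transposed onto the test sequence `g`. -/
theorem sum_range_rLah_succ_mul (r n : ℕ) (g : ℕ → ℤ) :
    ∑ j ∈ range (n + 2), (-1) ^ j * rLah r (n + 1) j * g j =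
      ∑ j ∈ range (n + 1), (-1) ^ j * rLah r n j * (((n : ℤ) + j + 2 * r) * g j - g (j + 1)) := by
  have hdiag : ∑ j ∈ range (n + 2), (-1) ^ j * rLah r n j * (((n : ℤ) + j + 2 * r) * g j) =
      ∑ j ∈ range (n + 1), (-1) ^ j * rLah r n j * (((n : ℤ) + j + 2 * r) * g j) := by
    rw [sum_range_succ, rLah_eq_zero_of_lt (Nat.lt_succ_self n), mul_zero, zero_mul, add_zero]
  simp only [mul_sub, sum_sub_distrib]
  rw [← hdiag, sum_range_succ', sum_range_succ' _ (n + 1), add_sub_right_comm, ← sum_sub_distrib]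
  congr 1
  · refine sum_congr rfl fun j _ => ?_
    rw [rLah]
    push_cast
    ring
  · rw [rLah]
    ring

/-- The `(n, k)` entry of `L_r D L_s D` with `D = diag((-1)^j)`. -/
def rLahAltSum (r s n k : ℕ) : ℤ :=
  ∑ j ∈ range (n + 1), (-1) ^ (j + k) * rLah r n j * rLah s j k

theorem rLahAltSum_succ_zero (r s n : ℕ) :
    rLahAltSum r s (n + 1) 0 = ((n : ℤ) + 2 * r - 2 * s) * rLahAltSum r s n 0 := by
  simp only [rLahAltSum, add_zero]
  rw [sum_range_rLah_succ_mul, mul_sum]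
  refine sum_congr rfl fun j _ => ?_
  rw [rLah]
  ring

theorem rLahAltSum_succ_succ (r s n k : ℕ) :
    rLahAltSum r s (n + 1) (k + 1) =
      rLahAltSum r s n k + ((n : ℤ) - k - 1 + 2 * r - 2 * s) * rLahAltSum r s n (k + 1) := by
  have hsign : rLahAltSum r s (n + 1) (k + 1) =
      ∑ j ∈ range (n + 2), (-1) ^ j * rLah r (n + 1) j * ((-1) ^ (k + 1) * rLah s j (k + 1)) := by
    refine sum_congr rfl fun j _ => ?_
    ring
  rw [hsign, sum_range_rLah_succ_mul, rLahAltSum, rLahAltSum, mul_sum, ← sum_add_distrib]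
  refine sum_congr rfl fun j _ => ?_
  rw [rLah.eq_4 s j k]
  ring

theorem choose_mul_prod_succ_succ {R : Type*} [CommRing R] (a : R) (n k : ℕ) :
    ((n + 1).choose (k + 1) : R) * ∏ i ∈ range (n + 1 - (k + 1)), (a + i) =
      (n.choose k : R) * ∏ i ∈ range (n - k), (a + i) +
        ((n : R) - k - 1 + a) * ((n.choose (k + 1) : R) * ∏ i ∈ range (n - (k + 1)), (a + i)) := by
  rw [Nat.choose_succ_succ, Nat.add_sub_add_right]
  push_cast
  rcases Nat.lt_or_ge k n with hkn | hnk
  · obtain ⟨m, rfl⟩ := Nat.exists_eq_add_of_lt hkn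
    rw [show k + m + 1 - k = m + 1 by omega, show k + m + 1 - (k + 1) = m by omega,
      prod_range_succ]
    push_cast
    ring
  · simp [Nat.choose_eq_zero_of_lt (Nat.lt_succ_of_le hnk)]

theorem rLahAltSum_eq (r s n k : ℕ) :
    rLahAltSum r s n k = (n.choose k : ℤ) * ∏ i ∈ range (n - k), (2 * (r : ℤ) - 2 * s + i) := by
  induction n generalizing k with
  | zero => cases k <;> simp [rLahAltSum, rLah]
  | succ n ih =>
    cases k with
    | zero =>
      rw [rLahAltSum_succ_zero, ih, Nat.sub_zero, Nat.sub_zero, prod_range_succ]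
      simp only [Nat.choose_zero_right, Nat.cast_one]
      ring
    | succ k =>
      rw [rLahAltSum_succ_succ, ih, ih, choose_mul_prod_succ_succ]
      ring

theorem sum_Icc_eq_rLahAltSum (r s n k : ℕ) :
    ∑ j ∈ Icc k n, (-1) ^ (j - k) * rLah r n j * rLah s j k = rLahAltSum r s n k := by
  rw [rLahAltSum, ← Nat.Ico_zero_eq_range]
  refine sum_subset_zero_on_sdiff (fun j hj => ?_) (fun j hj => ?_) (fun j hj => ?_)
  · simp only [mem_Icc, mem_Ico] at hj ⊢
    omega
  · simp only [mem_sdiff, mem_Icc, mem_Ico] at hj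
    rw [rLah_eq_zero_of_lt (by omega : j < k), mul_zero]
  · have hkj := (mem_Icc.mp hj).1
    rw [show j + k = (j - k) + 2 * k by omega, pow_add, pow_mul, neg_one_sq, one_pow, mul_one]

theorem rLah_orthogonality_rising_general (n k r s : ℕ) :
    (n.choose k : ℤ) * ∏ i ∈ range (n - k), (2 * (r : ℤ) - 2 * s + i) =
      ∑ j ∈ Icc k n, (-1) ^ (j - k) * rLah r n j * rLah s j k := by
  rw [sum_Icc_eq_rLahAltSum, rLahAltSum_eq]

theorem rLah_orthogonality_rising (n k r s : ℕ) (hkn : k ≤ n) (hsr : s ≤ r) :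
    (n.choose k : ℤ) * ∏ i ∈ range (n - k), (2 * (r : ℤ) - 2 * s + i) =
      ∑ j ∈ Icc k n, (-1) ^ (j - k) * rLah r n j * rLah s j k :=
  rLah_orthogonality_rising_general n k r s
end

section
/- For 0 ≤ k ≤ n and natural numbers r, s of the same parity, L_{(r+s)/2}(n,k) = Σ_{j=k}^{n} c_r(n,j) · S_s(j,k). -/
open Finset

/-!
The convolution `∑ⱼ c_r(n,j) S_s(j,k)` satisfies the recurrence of `L_t(n,k)` as soon as
`r + s = 2t`: expanding `c_r(n+1,j)` by its recurrence and shifting `j` turns the sum into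
`∑ⱼ c_r(n,j) (S_s(j+1,k) + (n+r) S_s(j,k))`, and expanding `S_s(j+1,k)` then produces the factor
`(k + s) + (n + r) = n + k + 2t` of the Lah recurrence.
-/

theorem rStirling1_eq_zero_of_lt (r : ℕ) : ∀ {n k : ℕ}, n < k → rStirling1 r n k = 0
  | 0, _ + 1, _ => rfl
  | n + 1, k + 1, h => by
    rw [rStirling1, rStirling1_eq_zero_of_lt r (by omega), rStirling1_eq_zero_of_lt r (by omega)]
    ring

theorem rStirling2_eq_zero_of_lt (r : ℕ) : ∀ {n k : ℕ}, n < k → rStirling2 r n k = 0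
  | 0, _ + 1, _ => rfl
  | n + 1, k + 1, h => by
    rw [rStirling2, rStirling2_eq_zero_of_lt r (by omega), rStirling2_eq_zero_of_lt r (by omega)]
    ring

theorem sum_rStirling1_succ_mul (r n : ℕ) (f : ℕ → ℤ) :
    ∑ j ∈ range (n + 2), rStirling1 r (n + 1) j * f j =
      ∑ j ∈ range (n + 1), rStirling1 r n j * (f (j + 1) + ((n : ℤ) + r) * f j) := by
  have hshift : ∑ j ∈ range (n + 1), rStirling1 r n (j + 1) * f (j + 1) + rStirling1 r n 0 * f 0 =
      ∑ j ∈ range (n + 1), rStirling1 r n j * f j := by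
    rw [← sum_range_succ' (fun j => rStirling1 r n j * f j), sum_range_succ,
      rStirling1_eq_zero_of_lt r n.lt_succ_self, zero_mul, add_zero]
  have hexpand : ∑ j ∈ range (n + 1), rStirling1 r (n + 1) (j + 1) * f (j + 1) =
      ∑ j ∈ range (n + 1), rStirling1 r n j * f (j + 1) +
        ((n : ℤ) + r) * ∑ j ∈ range (n + 1), rStirling1 r n (j + 1) * f (j + 1) := by
    rw [mul_sum, ← sum_add_distrib]
    exact sum_congr rfl fun j _ => by rw [rStirling1]; ring
  simp only [mul_add, sum_add_distrib, mul_left_comm _ ((n : ℤ) + r), ← mul_sum]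
  rw [sum_range_succ', hexpand, rStirling1, ← hshift]
  ring

theorem rLah_eq_sum_range_rStirling {r s t : ℕ} (hrst : r + s = 2 * t) (n k : ℕ) :
    rLah t n k = ∑ j ∈ range (n + 1), rStirling1 r n j * rStirling2 s j k := by
  have hrst' : (r : ℤ) + s = 2 * t := by exact_mod_cast hrst
  induction n generalizing k with
  | zero => cases k <;> simp [rLah, rStirling1, rStirling2]
  | succ n ih =>
    rw [sum_rStirling1_succ_mul]
    cases k with
    | zero =>
      rw [rLah, ih, mul_sum]
      refine sum_congr rfl fun j _ => ?_
      rw [rStirling2]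
      linear_combination -rStirling1 r n j * rStirling2 s j 0 * hrst'
    | succ k =>
      rw [rLah, ih, ih, mul_sum, ← sum_add_distrib]
      refine sum_congr rfl fun j _ => ?_
      rw [rStirling2]
      linear_combination -rStirling1 r n j * rStirling2 s j (k + 1) * hrst'

theorem rLah_eq_sum_stirling_general (n k r s : ℕ) (hpar : r % 2 = s % 2) :
    rLah ((r + s) / 2) n k = ∑ j ∈ Icc k n, rStirling1 r n j * rStirling2 s j k := by
  rw [rLah_eq_sum_range_rStirling (r := r) (s := s) (by omega)]
  refine (sum_subset (fun j hj => ?_) fun j hjn hj => ?_).symm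
  · simp only [mem_Icc, mem_range] at hj ⊢
    omega
  · have hjk : j < k := by
      simp only [mem_Icc, mem_range, not_and, not_le] at hjn hj
      omega
    rw [rStirling2_eq_zero_of_lt s hjk, mul_zero]

theorem rLah_eq_sum_stirling (n k r s : ℕ) (hkn : k ≤ n) (hpar : r % 2 = s % 2) :
    rLah ((r + s) / 2) n k = ∑ j ∈ Icc k n, rStirling1 r n j * rStirling2 s j k :=
  rLah_eq_sum_stirling_general n k r s hpar
end
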